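/- Let d >= 1, let sigma1 and sigma2 be real d-by-d matrices with sigma2 invertible, and let xi be a nonzero vector in R^d. Set v = sigma2^{-1} xi, let H = I - 2 (v v^T)/|v|^2 (the Householder reflection across the hyperplane orthogonal to v), and let alpha = sigma1 - sigma2 H. Then trace(alpha alpha^T) - |alpha^T xi|^2/|xi|^2 = trace((sigma1 - sigma2)(sigma1 - sigma2)^T) - |(sigma1 - sigma2)^T xi|^2/|xi|^2. -/
import Mathlib


open Matrix

/-- key algebraic identity in the coupling argument, proof of Lemma 4.2:
if `v = σ₂⁻¹ ξ`, `H = I - 2 v vᵀ/|v|²` is the Householder reflection and `α = σ₁ - σ₂ H`,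
then `tr(α αᵀ) - |αᵀ ξ|²/|ξ|² = tr((σ₁-σ₂)(σ₁-σ₂)ᵀ) - |(σ₁-σ₂)ᵀ ξ|²/|ξ|²`. -/
theorem stmt13 (d : ℕ) (hd : 1 ≤ d) (σ1 σ2 : Matrix (Fin d) (Fin d) ℝ)
    (hσ2 : IsUnit σ2.det) (ξ : Fin d → ℝ) (hξ : ξ ≠ 0)
    (v : Fin d → ℝ) (hv : v = σ2⁻¹.mulVec ξ)
    (H : Matrix (Fin d) (Fin d) ℝ)
    (hH : H = 1 - (2 / ∑ i, v i ^ 2) • Matrix.vecMulVec v v)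
    (α : Matrix (Fin d) (Fin d) ℝ) (hα : α = σ1 - σ2 * H) :
    Matrix.trace (α * α.transpose) - (∑ i, (α.transpose.mulVec ξ i) ^ 2) / (∑ i, ξ i ^ 2)
      = Matrix.trace ((σ1 - σ2) * (σ1 - σ2).transpose)
        - (∑ i, ((σ1 - σ2).transpose.mulVec ξ i) ^ 2) / (∑ i, ξ i ^ 2) := by
  set β := σ1 - σ2 with hβ
  set S : ℝ := ∑ i, ξ i ^ 2 with hS
  set V : ℝ := ∑ i, v i ^ 2 with hV
  set c : ℝ := 2 / V with hc
  set M : Matrix (Fin d) (Fin d) ℝ := Matrix.vecMulVec ξ v with hM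
  -- S > 0
  have hSpos : 0 < S := by
    obtain ⟨i, hi⟩ : ∃ i, ξ i ≠ 0 := by
      by_contra h
      push_neg at h
      exact hξ (funext h)
    exact Finset.sum_pos' (fun j _ => sq_nonneg _)
      ⟨i, Finset.mem_univ i, by positivity⟩
  have hSne : S ≠ 0 := ne_of_gt hSpos
  -- σ2 v = ξ
  have hξv : σ2.mulVec v = ξ := by
    rw [hv, Matrix.mulVec_mulVec, Matrix.mul_nonsing_inv _ hσ2, Matrix.one_mulVec]
  -- σ2 * v vᵀ = ξ vᵀ
  have hmul : σ2 * Matrix.vecMulVec v v = M := by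
    rw [hM, ← hξv]
    ext i j
    simp [Matrix.mul_apply, Matrix.vecMulVec_apply, Matrix.mulVec, dotProduct,
      Finset.sum_mul, mul_assoc]
  -- α = β + c • ξ vᵀ
  have hα' : α = β + c • M := by
    have h2 : σ2 * H = σ2 - c • M := by
      rw [hH, Matrix.mul_sub, Matrix.mul_one, Matrix.mul_smul, hmul]
    rw [hα, h2, hβ]
    abel
  -- Mᵀ
  have hMt : M.transpose = Matrix.vecMulVec v ξ := by
    ext i j; simp [hM, Matrix.vecMulVec_apply, mul_comm]
  -- the cross term
  set D : ℝ := ∑ i, ∑ j, ξ i * β i j * v j with hD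
  have htrMM : Matrix.trace (M * M.transpose) = S * V := by
    rw [hS, hV, Finset.sum_mul_sum]
    simp [hM, Matrix.trace, Matrix.diag, Matrix.mul_apply, Matrix.vecMulVec_apply]
    congr 1; ext i; congr 1; ext j; ring
  have htrBM : Matrix.trace (β * M.transpose) = D := by
    simp [hM, hD, Matrix.trace, Matrix.diag, Matrix.mul_apply, Matrix.vecMulVec_apply]
    congr 1; ext i; congr 1; ext j; ring
  have htrMB : Matrix.trace (M * β.transpose) = D := by
    simp [hM, hD, Matrix.trace, Matrix.diag, Matrix.mul_apply, Matrix.vecMulVec_apply]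
    congr 1; ext i; congr 1; ext j; ring
  -- trace identity
  have htr : Matrix.trace (α * α.transpose)
      = Matrix.trace (β * β.transpose) + c * D + c * D + c * c * (S * V) := by
    rw [hα', Matrix.transpose_add, Matrix.transpose_smul]
    simp only [Matrix.add_mul, Matrix.mul_add, Matrix.smul_mul, Matrix.mul_smul,
      smul_smul, Matrix.trace_add, Matrix.trace_smul, smul_eq_mul,
      htrMM, htrBM, htrMB]
    ring
  -- vector identity
  have hMv : (M.transpose).mulVec ξ = S • v := by
    rw [hMt]
    ext i
    simp [Matrix.mulVec, dotProduct, Matrix.vecMulVec_apply, hS,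
      Finset.sum_mul, Finset.mul_sum]
    congr 1; ext j; ring
  have hvec : α.transpose.mulVec ξ = β.transpose.mulVec ξ + (c * S) • v := by
    rw [hα', Matrix.transpose_add, Matrix.transpose_smul, Matrix.add_mulVec,
      Matrix.smul_mulVec, hMv, smul_smul]
  have hwv : ∑ i, (β.transpose.mulVec ξ) i * v i = D := by
    simp [hD, Matrix.mulVec, dotProduct, Finset.sum_mul]
    rw [Finset.sum_comm]
    congr 1; ext i; congr 1; ext j; ring
  set W : ℝ := ∑ i, ((β.transpose.mulVec ξ) i) ^ 2 with hW
  have hsum : ∑ i, (α.transpose.mulVec ξ i) ^ 2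
      = W + 2 * (c * S) * D + (c * S) ^ 2 * V := by
    rw [hvec]
    calc ∑ i, ((β.transpose.mulVec ξ + (c * S) • v) i) ^ 2
        = ∑ i, (((β.transpose.mulVec ξ) i) ^ 2
            + 2 * (c * S) * ((β.transpose.mulVec ξ) i * v i)
            + (c * S) ^ 2 * (v i) ^ 2) := by
          refine Finset.sum_congr rfl fun i _ => by
            simp only [Pi.add_apply, Pi.smul_apply, smul_eq_mul]; ring
      _ = W + 2 * (c * S) * (∑ i, (β.transpose.mulVec ξ) i * v i)
            + (c * S) ^ 2 * V := by
          rw [Finset.sum_add_distrib, Finset.sum_add_distrib, ← Finset.mul_sum,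
            ← Finset.mul_sum]
      _ = W + 2 * (c * S) * D + (c * S) ^ 2 * V := by rw [hwv]
  rw [htr, hsum]
  field_simp
  ring
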